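/- arXiv:math/0412508 — 5 statements merged into one kernel-verified Lean document; each statement's English description precedes it below -/
import Mathlib

section
/- Let H₁, H₂, H₃ be complex Hilbert spaces and A ∈ B(H₁), B ∈ B(H₂,H₁), C ∈ B(H₂), D ∈ B(H₃,H₂), E ∈ B(H₃). Suppose that the 2×2 operator matrices [[A, B],[B*, C]] (on H₁ ⊕ H₂) and [[C, D],[D*, E]] (on H₂ ⊕ H₃) are positive definite. For X ∈ B(H₃,H₁) let M(X) be the 3×3 operator matrix [[A, B, X],[B*, C, D],[X*, D*, E]] on H₁ ⊕ H₂ ⊕ H₃. Then there exist X for which M(X) is positive definite; in particular, for X₀ := B C⁻¹ D the operator M(X₀) is positive definite. -/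
/-! With `v := C⁻¹ D z`, the quadratic form of `M(B C⁻¹ D)` at `(x, y, z)` splits as the form of
`[[A, B], [B*, C]]` at `(x, y + v)` plus the form of `[[C, D], [D*, E]]` at `(-v, z)`; the
cross terms cancel because `C v = D z`. Both summands are coercive, and
`‖y‖² ≤ 2 (‖y + v‖² + ‖v‖²)` turns their sum into a lower bound by `min ε₁ ε₂ / 2` times
`‖x‖² + ‖y‖² + ‖z‖²`. -/

noncomputable section

open ContinuousLinearMap

variable {H₁ H₂ H₃ : Type*}
  [NormedAddCommGroup H₁] [InnerProductSpace ℂ H₁] [CompleteSpace H₁]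
  [NormedAddCommGroup H₂] [InnerProductSpace ℂ H₂] [CompleteSpace H₂]
  [NormedAddCommGroup H₃] [InnerProductSpace ℂ H₃] [CompleteSpace H₃]

/-- Positive definiteness of the 2×2 operator matrix `[[A, B], [B*, C]]`, regarded as an
operator on the Hilbert-space direct sum `H₁ ⊕ H₂`: it is self-adjoint (equivalently, `A` and
`C` are self-adjoint, the off-diagonal entries being automatically adjoint to each other) and
its quadratic form is bounded below by `ε` times the squared norm. -/
def Pos2 {E F : Type*} [NormedAddCommGroup E] [InnerProductSpace ℂ E] [CompleteSpace E]
    [NormedAddCommGroup F] [InnerProductSpace ℂ F] [CompleteSpace F]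
    (A : E →L[ℂ] E) (B : F →L[ℂ] E) (C : F →L[ℂ] F) : Prop :=
  IsSelfAdjoint A ∧ IsSelfAdjoint C ∧
  ∃ ε : ℝ, 0 < ε ∧ ∀ (x : E) (y : F),
    ε * (‖x‖ ^ 2 + ‖y‖ ^ 2) ≤
      (inner ℂ (A x) x : ℂ).re + 2 * (inner ℂ (B y) x : ℂ).re + (inner ℂ (C y) y : ℂ).re

/-- Positive definiteness of the 3×3 operator matrix `M(X) = [[A,B,X],[B*,C,D],[X*,D*,E]]`,
regarded as an operator on the Hilbert-space direct sum `H₁ ⊕ H₂ ⊕ H₃`. -/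
def Pos3 (A : H₁ →L[ℂ] H₁) (B : H₂ →L[ℂ] H₁) (X : H₃ →L[ℂ] H₁)
    (C : H₂ →L[ℂ] H₂) (D : H₃ →L[ℂ] H₂) (E : H₃ →L[ℂ] H₃) : Prop :=
  IsSelfAdjoint A ∧ IsSelfAdjoint C ∧ IsSelfAdjoint E ∧
  ∃ ε : ℝ, 0 < ε ∧ ∀ (x : H₁) (y : H₂) (z : H₃),
    ε * (‖x‖ ^ 2 + ‖y‖ ^ 2 + ‖z‖ ^ 2) ≤
      (inner ℂ (A x) x : ℂ).re + (inner ℂ (C y) y : ℂ).re + (inner ℂ (E z) z : ℂ).re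
      + 2 * (inner ℂ (B y) x : ℂ).re + 2 * (inner ℂ (X z) x : ℂ).re + 2 * (inner ℂ (D z) y : ℂ).re

section

variable {H K L : Type*} [NormedAddCommGroup H] [InnerProductSpace ℂ H]
  [NormedAddCommGroup K] [InnerProductSpace ℂ K] [NormedAddCommGroup L] [InnerProductSpace ℂ L]

lemma isUnit_of_forall_le_re_inner [CompleteSpace H] (C : H →L[ℂ] H) {ε : ℝ} (hε : 0 < ε)
    (h : ∀ y, ε * ‖y‖ ^ 2 ≤ (inner ℂ (C y) y : ℂ).re) : IsUnit C :=
  isUnit_of_forall_le_norm_inner_map C (c := ⟨ε, hε.le⟩) hε fun y =>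
    (mul_comm _ ε).le.trans <| (h y).trans (Complex.re_le_norm _)

lemma Pos2.isUnit_left [CompleteSpace H] [CompleteSpace K] {A : H →L[ℂ] H} {B : K →L[ℂ] H}
    {C : K →L[ℂ] K} (h : Pos2 A B C) : IsUnit A := by
  obtain ⟨-, -, ε, hε, hpos⟩ := h
  exact isUnit_of_forall_le_re_inner A hε fun x => by simpa using hpos x 0

lemma re_inner_block_split_of_apply_eq [CompleteSpace K] (A : H →L[ℂ] H) (B : K →L[ℂ] H)
    {C : K →L[ℂ] K} (D : L →L[ℂ] K) (E : L →L[ℂ] L) (hC : IsSelfAdjoint C) {v : K} {z : L}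
    (hv : C v = D z) (x : H) (y : K) :
    (inner ℂ (A x) x : ℂ).re + (inner ℂ (C y) y : ℂ).re + (inner ℂ (E z) z : ℂ).re
      + 2 * (inner ℂ (B y) x : ℂ).re + 2 * (inner ℂ (B v) x : ℂ).re
      + 2 * (inner ℂ (D z) y : ℂ).re =
    ((inner ℂ (A x) x : ℂ).re + 2 * (inner ℂ (B (y + v)) x : ℂ).re
      + (inner ℂ (C (y + v)) (y + v) : ℂ).re)
    + ((inner ℂ (C (-v)) (-v) : ℂ).re + 2 * (inner ℂ (D z) (-v) : ℂ).re
      + (inner ℂ (E z) z : ℂ).re) := by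
  have hcross : (inner ℂ (C y) v : ℂ).re = (inner ℂ (D z) y : ℂ).re := by
    rw [← hv, hC.isSymmetric.apply_clm y v, ← inner_conj_symm, Complex.conj_re]
  simp only [map_add, map_neg, inner_add_left, inner_add_right, inner_neg_left,
    inner_neg_right, neg_neg, Complex.add_re, Complex.neg_re, hcross, hv]
  ring

end

theorem Pos2.pos3_schur_completion {A : H₁ →L[ℂ] H₁} {B : H₂ →L[ℂ] H₁} {C : H₂ →L[ℂ] H₂}
    {D : H₃ →L[ℂ] H₂} {E : H₃ →L[ℂ] H₃} (h1 : Pos2 A B C) (h2 : Pos2 C D E) :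
    Pos3 A B (B ∘L Ring.inverse C ∘L D) C D E := by
  have hCinv : ∀ u, C (Ring.inverse C u) = u := fun u => by
    simpa using congr($(Ring.mul_inverse_cancel C h2.isUnit_left) u)
  obtain ⟨hA, hC, ε₁, hε₁, H1⟩ := h1
  obtain ⟨-, hE, ε₂, hε₂, H2⟩ := h2
  refine ⟨hA, hC, hE, min ε₁ ε₂ / 2, by positivity, fun x y z => ?_⟩
  set v := Ring.inverse C (D z)
  have hy : ‖y‖ ^ 2 ≤ 2 * (‖y + v‖ ^ 2 + ‖-v‖ ^ 2) := by
    calc ‖y‖ ^ 2 = ‖(y + v) + -v‖ ^ 2 := by rw [add_neg_cancel_right]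
      _ ≤ (‖y + v‖ + ‖-v‖) ^ 2 := by gcongr; exact norm_add_le _ _
      _ ≤ 2 * (‖y + v‖ ^ 2 + ‖-v‖ ^ 2) := add_sq_le
  rw [show (B ∘L Ring.inverse C ∘L D) z = B v from rfl,
    re_inner_block_split_of_apply_eq A B D E hC (hCinv (D z))]
  calc min ε₁ ε₂ / 2 * (‖x‖ ^ 2 + ‖y‖ ^ 2 + ‖z‖ ^ 2)
      ≤ min ε₁ ε₂ * (‖x‖ ^ 2 + ‖y + v‖ ^ 2) + min ε₁ ε₂ * (‖-v‖ ^ 2 + ‖z‖ ^ 2) := by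
        have : 0 < min ε₁ ε₂ := lt_min hε₁ hε₂
        nlinarith [sq_nonneg ‖x‖, sq_nonneg ‖z‖]
    _ ≤ ε₁ * (‖x‖ ^ 2 + ‖y + v‖ ^ 2) + ε₂ * (‖-v‖ ^ 2 + ‖z‖ ^ 2) := by
        gcongr
        exacts [min_le_left _ _, min_le_right _ _]
    _ ≤ _ := add_le_add (H1 x (y + v)) (H2 (-v) z)

theorem three_by_three_completion_exists
    (A : H₁ →L[ℂ] H₁) (B : H₂ →L[ℂ] H₁) (C : H₂ →L[ℂ] H₂)
    (D : H₃ →L[ℂ] H₂) (E : H₃ →L[ℂ] H₃)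
    (h1 : Pos2 A B C) (h2 : Pos2 C D E) :
    (∃ X : H₃ →L[ℂ] H₁, Pos3 A B X C D E) ∧
      Pos3 A B (B ∘L Ring.inverse C ∘L D) C D E :=
  have h := h1.pos3_schur_completion h2
  ⟨⟨_, h⟩, h⟩
end
end

section
/- Let H be a complex Hilbert space, n, m ≥ 0, and let p(z,w) = Σ_{i=0}^n Σ_{j=0}^m p_{ij} z^i w^j with coefficients p_{ij} ∈ B(H). Then p is stable (i.e., p(z,w) is an invertible operator for all (z,w) with |z| ≤ 1 and |w| ≤ 1) if and only if p(z,w) is invertible for all (z,w) with |z| ≤ 1, |w| = 1 and for all (z,w) with |z| = 1, |w| ≤ 1. -/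
/- STATEMENT 6: a two-variable operator polynomial is stable (invertible on the closed
   bidisk) iff it is invertible on (closed disk) × (circle) and on (circle) × (closed disk). -/

noncomputable section

variable {H : Type*} [NormedAddCommGroup H] [InnerProductSpace ℂ H] [CompleteSpace H]

/-- The value at `(z, w)` of the two-variable operator polynomial with coefficients `p i j`. -/
def polyEval2 {n m : ℕ} (p : Fin (n+1) → Fin (m+1) → (H →L[ℂ] H)) (z w : ℂ) : H →L[ℂ] H :=
  ∑ i : Fin (n+1), ∑ j : Fin (m+1), (z ^ (i : ℕ) * w ^ (j : ℕ)) • p i j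

lemma polyEval2_continuous {n m : ℕ} (p : Fin (n+1) → Fin (m+1) → (H →L[ℂ] H)) :
    Continuous (fun zw : ℂ × ℂ => polyEval2 p zw.1 zw.2) := by
  unfold polyEval2
  refine continuous_finset_sum _ fun i _ => continuous_finset_sum _ fun j _ => ?_
  exact ((continuous_fst.pow _).mul (continuous_snd.pow _)).smul continuous_const

lemma polyEval2_diff_left {n m : ℕ} (p : Fin (n+1) → Fin (m+1) → (H →L[ℂ] H)) (w : ℂ) :
    Differentiable ℂ (fun z => polyEval2 p z w) := by
  unfold polyEval2
  refine Differentiable.fun_sum fun i _ => Differentiable.fun_sum fun j _ => ?_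
  exact ((differentiable_pow _).mul_const _).smul_const _

lemma polyEval2_diff_right {n m : ℕ} (p : Fin (n+1) → Fin (m+1) → (H →L[ℂ] H)) (z : ℂ) :
    Differentiable ℂ (fun w => polyEval2 p z w) := by
  unfold polyEval2
  refine Differentiable.fun_sum fun i _ => Differentiable.fun_sum fun j _ => ?_
  exact ((differentiable_pow _).const_mul _).smul_const _

lemma polyEval2_sub_norm_le {n m : ℕ} (p : Fin (n+1) → Fin (m+1) → (H →L[ℂ] H))
    (z z' w : ℂ) (hw : ‖w‖ ≤ 1) :
    ‖polyEval2 p z' w - polyEval2 p z w‖ ≤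
      ∑ i : Fin (n+1), ∑ j : Fin (m+1), ‖z' ^ (i : ℕ) - z ^ (i : ℕ)‖ * ‖p i j‖ := by
  have hrw : polyEval2 p z' w - polyEval2 p z w
      = ∑ i : Fin (n+1), ∑ j : Fin (m+1),
          ((z' ^ (i : ℕ) - z ^ (i : ℕ)) * w ^ (j : ℕ)) • p i j := by
    unfold polyEval2
    rw [← Finset.sum_sub_distrib]
    refine Finset.sum_congr rfl fun i _ => ?_
    rw [← Finset.sum_sub_distrib]
    refine Finset.sum_congr rfl fun j _ => ?_
    rw [← sub_smul, sub_mul]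
  rw [hrw]
  refine (norm_sum_le _ _).trans (Finset.sum_le_sum fun i _ => ?_)
  refine (norm_sum_le _ _).trans (Finset.sum_le_sum fun j _ => ?_)
  rw [norm_smul, norm_mul]
  have h1 : ‖w ^ (j : ℕ)‖ ≤ 1 := by
    rw [norm_pow]; exact pow_le_one₀ (norm_nonneg _) hw
  calc ‖z' ^ (i : ℕ) - z ^ (i : ℕ)‖ * ‖w ^ (j : ℕ)‖ * ‖p i j‖
      ≤ ‖z' ^ (i : ℕ) - z ^ (i : ℕ)‖ * 1 * ‖p i j‖ := by
        gcongr
    _ = ‖z' ^ (i : ℕ) - z ^ (i : ℕ)‖ * ‖p i j‖ := by ring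

theorem stable_iff_stable_on_distinguished_boundaries (n m : ℕ)
    (p : Fin (n+1) → Fin (m+1) → (H →L[ℂ] H)) :
    (∀ z w : ℂ, ‖z‖ ≤ 1 → ‖w‖ ≤ 1 → IsUnit (polyEval2 p z w)) ↔
      ((∀ z w : ℂ, ‖z‖ ≤ 1 → ‖w‖ = 1 → IsUnit (polyEval2 p z w)) ∧
       (∀ z w : ℂ, ‖z‖ = 1 → ‖w‖ ≤ 1 → IsUnit (polyEval2 p z w))) := by
  constructor
  · intro h
    exact ⟨fun z w hz hw => h z w hz hw.le, fun z w hz hw => h z w hz.le hw⟩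
  rintro ⟨h1, h2⟩
  by_cases htriv : Subsingleton (H →L[ℂ] H)
  · intro z w _ _; exact isUnit_of_subsingleton _
  rw [not_subsingleton_iff_nontrivial] at htriv
  -- Step 1: a uniform bound `C` for the inverse on (circle) × (closed disk)
  obtain ⟨C, hC⟩ : ∃ C : ℝ, ∀ z w : ℂ, ‖z‖ = 1 → ‖w‖ ≤ 1 →
      ‖Ring.inverse (polyEval2 p z w)‖ ≤ C := by
    have hcomp : IsCompact (Metric.sphere (0:ℂ) 1 ×ˢ Metric.closedBall (0:ℂ) 1) :=
      (isCompact_sphere 0 1).prod (isCompact_closedBall 0 1)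
    have hcont : ContinuousOn (fun zw : ℂ × ℂ => ‖Ring.inverse (polyEval2 p zw.1 zw.2)‖)
        (Metric.sphere (0:ℂ) 1 ×ˢ Metric.closedBall (0:ℂ) 1) := by
      intro x hx
      obtain ⟨hx1, hx2⟩ := hx
      obtain ⟨u, hu⟩ := h2 x.1 x.2 (mem_sphere_zero_iff_norm.mp hx1)
        (mem_closedBall_zero_iff.mp hx2)
      have hinvc : ContinuousAt (Ring.inverse : (H →L[ℂ] H) → (H →L[ℂ] H))
          (polyEval2 p x.1 x.2) := by
        rw [← hu]; exact NormedRing.inverse_continuousAt u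
      have hca : ContinuousAt (fun zw : ℂ × ℂ => Ring.inverse (polyEval2 p zw.1 zw.2)) x :=
        Filter.Tendsto.comp hinvc ((polyEval2_continuous p).continuousAt)
      exact (hca.norm).continuousWithinAt
    obtain ⟨C, hC⟩ := hcomp.exists_bound_of_continuousOn hcont
    refine ⟨C, fun z w hz hw => ?_⟩
    have := hC (z, w) ⟨mem_sphere_zero_iff_norm.mpr hz, mem_closedBall_zero_iff.mpr hw⟩
    exact (le_abs_self _).trans (by simpa using this)
  have hCpos : 0 < C := by
    have := hC 1 0 (by simp) (by simp)
    have h0 : (0:ℝ) < ‖Ring.inverse (polyEval2 p 1 0)‖ := by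
      obtain ⟨u, hu⟩ := h2 1 0 (by simp) (by simp)
      rw [← hu, Ring.inverse_unit]
      exact Units.norm_pos u⁻¹
    linarith
  -- Step 2: by maximum modulus in `z`, the bound holds on (closed disk) × (circle)
  have step2 : ∀ z w : ℂ, ‖z‖ ≤ 1 → ‖w‖ = 1 →
      ‖Ring.inverse (polyEval2 p z w)‖ ≤ C := by
    intro z w hz hw
    have hdiffAt : ∀ ζ : ℂ, ‖ζ‖ ≤ 1 →
        DifferentiableAt ℂ (fun z => Ring.inverse (polyEval2 p z w)) ζ := fun ζ hζ =>
      DifferentiableAt.inverse ((polyEval2_diff_left p w).differentiableAt) (h1 ζ w hζ hw)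
    have hcl : closure (Metric.ball (0:ℂ) 1) = Metric.closedBall (0:ℂ) 1 :=
      closure_ball (0:ℂ) one_ne_zero
    have hd : DiffContOnCl ℂ (fun z => Ring.inverse (polyEval2 p z w)) (Metric.ball 0 1) := by
      constructor
      · intro ζ hζ
        exact (hdiffAt ζ (mem_closedBall_zero_iff.mp (Metric.ball_subset_closedBall hζ))).differentiableWithinAt
      · rw [hcl]
        intro ζ hζ
        exact (hdiffAt ζ (mem_closedBall_zero_iff.mp hζ)).continuousAt.continuousWithinAt
    refine Complex.norm_le_of_forall_mem_frontier_norm_le Metric.isBounded_ball hd ?_ ?_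
    · intro ζ hζ
      rw [frontier_ball (0:ℂ) one_ne_zero] at hζ
      exact hC ζ w (mem_sphere_zero_iff_norm.mp hζ) hw.le
    · rw [hcl]; exact mem_closedBall_zero_iff.mpr hz
  -- Step 3: if the `w`-slice at `z` is stable then the bound holds for all `‖w‖ ≤ 1`
  have lemA : ∀ z : ℂ, ‖z‖ ≤ 1 → (∀ w : ℂ, ‖w‖ ≤ 1 → IsUnit (polyEval2 p z w)) →
      ∀ w : ℂ, ‖w‖ ≤ 1 → ‖Ring.inverse (polyEval2 p z w)‖ ≤ C := by
    intro z hz hS w hw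
    have hdiffAt : ∀ ζ : ℂ, ‖ζ‖ ≤ 1 →
        DifferentiableAt ℂ (fun w => Ring.inverse (polyEval2 p z w)) ζ := fun ζ hζ =>
      DifferentiableAt.inverse ((polyEval2_diff_right p z).differentiableAt) (hS ζ hζ)
    have hcl : closure (Metric.ball (0:ℂ) 1) = Metric.closedBall (0:ℂ) 1 :=
      closure_ball (0:ℂ) one_ne_zero
    have hd : DiffContOnCl ℂ (fun w => Ring.inverse (polyEval2 p z w)) (Metric.ball 0 1) := by
      constructor
      · intro ζ hζ
        exact (hdiffAt ζ (mem_closedBall_zero_iff.mp (Metric.ball_subset_closedBall hζ))).differentiableWithinAt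
      · rw [hcl]
        intro ζ hζ
        exact (hdiffAt ζ (mem_closedBall_zero_iff.mp hζ)).continuousAt.continuousWithinAt
    refine Complex.norm_le_of_forall_mem_frontier_norm_le Metric.isBounded_ball hd ?_ ?_
    · intro ζ hζ
      rw [frontier_ball (0:ℂ) one_ne_zero] at hζ
      exact step2 z ζ hz (mem_sphere_zero_iff_norm.mp hζ)
    · rw [hcl]; exact mem_closedBall_zero_iff.mpr hw
  -- Step 4: quantitative open/closedness
  have claim : ∀ z z' : ℂ, ‖z‖ ≤ 1 → ‖z'‖ ≤ 1 →
      (∀ w : ℂ, ‖w‖ ≤ 1 → IsUnit (polyEval2 p z w)) →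
      (∑ i : Fin (n+1), ∑ j : Fin (m+1), ‖z' ^ (i : ℕ) - z ^ (i : ℕ)‖ * ‖p i j‖) < C⁻¹ →
      ∀ w : ℂ, ‖w‖ ≤ 1 → IsUnit (polyEval2 p z' w) := by
    intro z z' hz hz' hS hsum w hw
    obtain ⟨u, hu⟩ := hS w hw
    have hinv : ‖((u⁻¹ : (H →L[ℂ] H)ˣ) : H →L[ℂ] H)‖ ≤ C := by
      have := lemA z hz hS w hw
      rwa [← hu, Ring.inverse_unit] at this
    have hinvpos : 0 < ‖((u⁻¹ : (H →L[ℂ] H)ˣ) : H →L[ℂ] H)‖ := Units.norm_pos u⁻¹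
    have hlt : ‖polyEval2 p z' w - (u : H →L[ℂ] H)‖ <
        ‖((u⁻¹ : (H →L[ℂ] H)ˣ) : H →L[ℂ] H)‖⁻¹ := by
      have hle := polyEval2_sub_norm_le p z z' w hw
      rw [hu]
      refine lt_of_le_of_lt hle (lt_of_lt_of_le hsum ?_)
      exact inv_anti₀ hinvpos hinv
    exact (Units.ofNearby u (polyEval2 p z' w) hlt).isUnit
  have Dsmall : ∀ z : ℂ, ∃ δ > 0, ∀ z' : ℂ, dist z' z < δ →
      (∑ i : Fin (n+1), ∑ j : Fin (m+1), ‖z' ^ (i : ℕ) - z ^ (i : ℕ)‖ * ‖p i j‖) < C⁻¹ := by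
    intro z
    have hg : Continuous (fun z' : ℂ =>
        ∑ i : Fin (n+1), ∑ j : Fin (m+1), ‖z' ^ (i : ℕ) - z ^ (i : ℕ)‖ * ‖p i j‖) := by
      refine continuous_finset_sum _ fun i _ => continuous_finset_sum _ fun j _ => ?_
      exact (((continuous_pow _).sub continuous_const).norm).mul continuous_const
    have hopen : IsOpen {x : ℂ | (∑ i : Fin (n+1), ∑ j : Fin (m+1),
        ‖x ^ (i : ℕ) - z ^ (i : ℕ)‖ * ‖p i j‖) < C⁻¹} :=
      isOpen_lt hg continuous_const
    have hmem : z ∈ {x : ℂ | (∑ i : Fin (n+1), ∑ j : Fin (m+1),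
        ‖x ^ (i : ℕ) - z ^ (i : ℕ)‖ * ‖p i j‖) < C⁻¹} := by
      simp [inv_pos.mpr hCpos]
    obtain ⟨δ, hδ, hball⟩ := Metric.isOpen_iff.mp hopen z hmem
    exact ⟨δ, hδ, fun z' hz' => hball (Metric.mem_ball.mpr hz')⟩
  -- Step 5: connectedness of the closed disk
  haveI : PreconnectedSpace (Metric.closedBall (0:ℂ) 1) :=
    Subtype.preconnectedSpace (convex_closedBall (0:ℂ) 1).isPreconnected
  set S : Set (Metric.closedBall (0:ℂ) 1) :=
    {x | ∀ w : ℂ, ‖w‖ ≤ 1 → IsUnit (polyEval2 p x.1 w)} with hSdef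
  have hSopen : IsOpen S := by
    rw [Metric.isOpen_iff]
    intro x hx
    obtain ⟨δ, hδ, hD⟩ := Dsmall x.1
    refine ⟨δ, hδ, fun y hy => ?_⟩
    rw [Metric.mem_ball, Subtype.dist_eq] at hy
    exact claim x.1 y.1 (mem_closedBall_zero_iff.mp x.2) (mem_closedBall_zero_iff.mp y.2)
      hx (hD y.1 hy)
  have hSclosed : IsClosed S := by
    refine isClosed_of_closure_subset ?_
    intro x hx
    obtain ⟨δ, hδ, hD⟩ := Dsmall x.1
    obtain ⟨y, hyS, hyd⟩ := Metric.mem_closure_iff.mp hx δ hδ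
    rw [Subtype.dist_eq, dist_comm] at hyd
    have hsum : (∑ i : Fin (n+1), ∑ j : Fin (m+1),
        ‖x.1 ^ (i : ℕ) - y.1 ^ (i : ℕ)‖ * ‖p i j‖) < C⁻¹ := by
      have := hD y.1 hyd
      have hswap : (∑ i : Fin (n+1), ∑ j : Fin (m+1),
          ‖x.1 ^ (i : ℕ) - y.1 ^ (i : ℕ)‖ * ‖p i j‖)
          = ∑ i : Fin (n+1), ∑ j : Fin (m+1), ‖y.1 ^ (i : ℕ) - x.1 ^ (i : ℕ)‖ * ‖p i j‖ := by
        refine Finset.sum_congr rfl fun i _ => Finset.sum_congr rfl fun j _ => ?_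
        rw [norm_sub_rev]
      rw [hswap]; exact this
    exact claim y.1 x.1 (mem_closedBall_zero_iff.mp y.2) (mem_closedBall_zero_iff.mp x.2)
      hyS hsum
  have hSne : S.Nonempty := by
    refine ⟨⟨1, by simp⟩, fun w hw => h2 1 w (by simp) hw⟩
  have hSuniv : S = Set.univ := IsClopen.eq_univ ⟨hSclosed, hSopen⟩ hSne
  intro z w hz hw
  have hzmem : (⟨z, mem_closedBall_zero_iff.mpr hz⟩ : Metric.closedBall (0:ℂ) 1) ∈ S := by
    rw [hSuniv]; exact Set.mem_univ _
  exact hzmem w hw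
end
end

section
/- Let K, H be complex Hilbert spaces, Γ_j ∈ B(K,H) (j ≥ 0), and let Hk : ℓ²_K(−ℕ₀) → ℓ²_H(ℕ₀) be a bounded operator with matrix entries (Hk)_{i,j} = Γ_{i−j} and ‖Hk‖ < 1. Let (B, D, Δ) solve the first Yule–Walker system: B : K → ℓ²_H(ℕ₀), D : K → ℓ²_K(−ℕ₀) with components D_j ∈ B(K), D_0 = I, B + Hk∘D = 0, Hk*∘B + D = Δ with Δ supported at index 0. Let (A, C, α) solve the second Yule–Walker system: A : H → ℓ²_H(ℕ₀) with components A_k ∈ B(H), A_0 = I, C : H → ℓ²_K(−ℕ₀), A + Hk∘C = α with α supported at index 0, and Hk*∘A + C = 0. Define sequences (Γ_j)_{j≤−1} and (Γ'_j)_{j≤−1} in B(K,H) by the recursions Γ_j x = −Σ_{k=1}^∞ Γ_{j+k}(D_{−k} x) and (Γ'_j)* y = −Σ_{k=1}^∞ (Γ'_{j+k})*(A_k y), where Γ_j = Γ'_j for j ≥ 0 are the given data (assume each series converges pointwise and defines a bounded operator). Then Γ_j = Γ'_j for all j ≤ −1: the two constructions produce the same sequence of operators. -/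
/-!
Induction on `N ≥ 1`, assuming `Γ_m = Γ'_m` for `m > -N`. Shifting `Hk` down one row at a time
gives bounded block-Hankel operators `T_N` with entries `Γ_{i+k-N}` and `U_N` with entries
`Γ'^*_{i+k-N}`. The recursions defining the two extensions say exactly that
`T_N (D x) = S^N (Hk (D x)) = -S^N (B x)` and `U_N (A y) = -S^N (C y)`, with `S` the forward shift.
By the induction hypothesis `T_N - U_N^*` has a single nonzero entry, `Γ_{-N} - Γ'_{-N}` at
`(0, 0)`, so `⟪(Γ_{-N} - Γ'_{-N}) x, y⟫ = ⟪D x, S^N (C y)⟫ - ⟪S^N (B x), A y⟫`, and the two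
remaining Yule–Walker equations make the right-hand side vanish.
-/

noncomputable section

open ContinuousLinearMap

open scoped lp InnerProduct InnerProductSpace ENNReal

namespace lp

section Normed

variable {𝕜 E F : Type*} [RCLike 𝕜] [NormedAddCommGroup E] [NormedSpace 𝕜 E]
  [NormedAddCommGroup F] [NormedSpace 𝕜 F]

lemma sum_norm_rpow_shift_le (N : ℕ) (f : ℓ²(ℕ, E)) (s : Finset ℕ) :
    ∑ i ∈ s, ‖f (i + N)‖ ^ (2 : ℝ≥0∞).toReal ≤ ‖f‖ ^ (2 : ℝ≥0∞).toReal := by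
  calc ∑ i ∈ s, ‖f (i + N)‖ ^ (2 : ℝ≥0∞).toReal
      = ∑ i ∈ s.map (addRightEmbedding N), ‖f i‖ ^ (2 : ℝ≥0∞).toReal := by simp
    _ ≤ ‖f‖ ^ (2 : ℝ≥0∞).toReal := sum_rpow_le_norm_rpow (by norm_num) f _

variable (𝕜) in
def backwardShift (N : ℕ) : ℓ²(ℕ, E) →L[𝕜] ℓ²(ℕ, E) :=
  LinearMap.mkContinuous
    { toFun := fun f => ⟨fun i => f (i + N), memℓp_gen' (sum_norm_rpow_shift_le N f)⟩
      map_add' := fun _ _ => rfl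
      map_smul' := fun _ _ => rfl } 1
    fun f => by
      rw [one_mul]
      exact norm_le_of_forall_sum_le (by norm_num) (norm_nonneg f) (sum_norm_rpow_shift_le N f)

@[simp]
lemma backwardShift_apply (N : ℕ) (f : ℓ²(ℕ, E)) (i : ℕ) :
    backwardShift 𝕜 N f i = f (i + N) := rfl

lemma backwardShift_single (N k : ℕ) (x : E) :
    backwardShift 𝕜 N (lp.single 2 k x) = if N ≤ k then lp.single 2 (k - N) x else 0 := by
  ext i
  split_ifs with h
  · simp only [backwardShift_apply, lp.single_apply, Pi.single_apply]
    congr 1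
    simp only [eq_iff_iff]
    omega
  · simp only [backwardShift_apply, lp.single_apply, lp.coeFn_zero, Pi.zero_apply]
    rw [Pi.single_apply, if_neg (by omega)]

lemma backwardShift_eq_zero {N : ℕ} (hN : 0 < N) {f : ℓ²(ℕ, E)} (hf : ∀ i, i ≠ 0 → f i = 0) :
    backwardShift 𝕜 N f = 0 := by
  ext i
  exact hf _ (by omega)

def HasEntries (T : ℓ²(ℕ, E) →L[𝕜] ℓ²(ℕ, F)) (a : ℕ → ℕ → E →L[𝕜] F) : Prop :=
  ∀ i k x, T (lp.single 2 k x) i = a i k x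

namespace HasEntries

variable {T U : ℓ²(ℕ, E) →L[𝕜] ℓ²(ℕ, F)} {a b : ℕ → ℕ → E →L[𝕜] F}

lemma hasSum_apply (hT : HasEntries T a) (v : ℓ²(ℕ, E)) (i : ℕ) :
    HasSum (fun k => a i k (v k)) (T v i) := by
  have := (lp.hasSum_single ENNReal.ofNat_ne_top v).mapL (evalCLM 𝕜 (fun _ : ℕ => F) 2 i ∘L T)
  simpa [evalCLM, hT i] using this

lemma ext (hT : HasEntries T a) (hU : HasEntries U a) : T = U :=
  lp.ext_continuousLinearMap ENNReal.ofNat_ne_top fun k => by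
    ext x i
    simp [hT i k x, hU i k x]

lemma sub (hT : HasEntries T a) (hU : HasEntries U b) : HasEntries (T - U) (a - b) :=
  fun i k x => by simp [hT i k x, hU i k x]

end HasEntries

end Normed

section Hilbert

variable {𝕜 E F : Type*} [RCLike 𝕜]
  [NormedAddCommGroup E] [InnerProductSpace 𝕜 E] [NormedAddCommGroup F] [InnerProductSpace 𝕜 F]

variable (𝕜) in
def forwardShift [CompleteSpace E] (N : ℕ) : ℓ²(ℕ, E) →L[𝕜] ℓ²(ℕ, E) := (backwardShift 𝕜 N)†

lemma forwardShift_apply [CompleteSpace E] (N : ℕ) (f : ℓ²(ℕ, E)) (i : ℕ) :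
    forwardShift 𝕜 N f i = if N ≤ i then f (i - N) else 0 := by
  refine ext_inner_left 𝕜 fun z => ?_
  rw [← lp.inner_single_left (𝕜 := 𝕜) i z (forwardShift 𝕜 N f), forwardShift,
    adjoint_inner_right, backwardShift_single]
  split_ifs
  · exact lp.inner_single_left _ _ _
  · simp

lemma forwardShift_single [CompleteSpace E] (N k : ℕ) (x : E) :
    forwardShift 𝕜 N (lp.single 2 k x) = lp.single 2 (k + N) x := by
  ext i
  rw [forwardShift_apply]
  split_ifs with h
  · simp only [lp.single_apply, Pi.single_apply]
    congr 1
    simp only [eq_iff_iff]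
    omega
  · simp only [lp.single_apply, Pi.single_apply]
    rw [if_neg (by omega)]

lemma HasEntries.adjoint [CompleteSpace E] [CompleteSpace F] {T : ℓ²(ℕ, E) →L[𝕜] ℓ²(ℕ, F)}
    {a : ℕ → ℕ → E →L[𝕜] F} (hT : HasEntries T a) : HasEntries (T†) fun k i => (a i k)† :=
  fun k i y => ext_inner_left 𝕜 fun z => by
    rw [← lp.inner_single_left (𝕜 := 𝕜) k z ((T†) (lp.single 2 i y)), adjoint_inner_right,
      lp.inner_single_right, hT, adjoint_inner_right]

lemma HasEntries.comp_forwardShift [CompleteSpace E] {T : ℓ²(ℕ, E) →L[𝕜] ℓ²(ℕ, F)}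
    {Φ : ℤ → E →L[𝕜] F} (hT : HasEntries T fun i k => Φ (i + k)) (N : ℕ) :
    T ∘L forwardShift 𝕜 N = backwardShift 𝕜 N ∘L T := by
  refine HasEntries.ext (a := fun i k => Φ (i + k + N)) (fun i k x => ?_) (fun i k x => ?_)
  · simp [forwardShift_single, hT i, add_assoc]
  · simp [hT _ k, add_right_comm]

lemma HasEntries.exists_sub_one [CompleteSpace F] {T : ℓ²(ℕ, E) →L[𝕜] ℓ²(ℕ, F)}
    {Φ : ℤ → E →L[𝕜] F} (hT : HasEntries T fun i k => Φ (i + k)) :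
    ∃ T' : ℓ²(ℕ, E) →L[𝕜] ℓ²(ℕ, F), HasEntries T' fun i k => Φ (i + k - 1) := by
  -- rows `i ≥ 1` are those of `S T`; row `0` is row `0` of `T` moved one column to the right,
  -- plus the new corner entry `Φ (-1)`
  refine ⟨forwardShift 𝕜 1 ∘L T + singleContinuousLinearMap 𝕜 (fun _ : ℕ => F) 2 0 ∘L
    (evalCLM 𝕜 (fun _ : ℕ => F) 2 0 ∘L T ∘L backwardShift 𝕜 1 +
      Φ (-1) ∘L evalCLM 𝕜 (fun _ : ℕ => E) 2 0), fun i k x => ?_⟩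
  rcases i with _ | i <;> rcases k with _ | k <;>
    simp [forwardShift_apply, backwardShift_single, evalCLM, hT _ _ x]
  ring_nf

lemma HasEntries.exists_sub [CompleteSpace F] {T : ℓ²(ℕ, E) →L[𝕜] ℓ²(ℕ, F)}
    {Φ : ℤ → E →L[𝕜] F} (hT : HasEntries T fun i k => Φ (i + k)) (N : ℕ) :
    ∃ T' : ℓ²(ℕ, E) →L[𝕜] ℓ²(ℕ, F), HasEntries T' fun i k => Φ (i + k - N) := by
  induction N with
  | zero => exact ⟨T, by simpa using hT⟩
  | succ N ih =>
    obtain ⟨T', hT'⟩ := ih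
    obtain ⟨T'', hT''⟩ := hT'.exists_sub_one (Φ := fun m => Φ (m - N))
    refine ⟨T'', fun i k x => ?_⟩
    rw [hT'' i k x]
    push_cast
    ring_nf

lemma HasEntries.apply_eq_forwardShift [CompleteSpace F] {T T' : ℓ²(ℕ, E) →L[𝕜] ℓ²(ℕ, F)}
    {Φ : ℤ → E →L[𝕜] F} {N : ℕ} (hT : HasEntries T fun i k => Φ (i + k))
    (hT' : HasEntries T' fun i k => Φ (i + k - N)) {v : ℓ²(ℕ, E)}
    (hv : ∀ j : ℤ, j < 0 → HasSum (fun k : ℕ => Φ (j + k) (v k)) 0) :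
    T' v = forwardShift 𝕜 N (T v) := by
  ext i
  rw [forwardShift_apply]
  refine (hT'.hasSum_apply v i).unique ?_
  split_ifs with h
  · convert hT.hasSum_apply v (i - N) using 4 with k
    push_cast [h]
    ring
  · convert hv (i - N) (by omega) using 4 with k
    ring

lemma HasEntries.inner_apply_eq_inner_apply_add [CompleteSpace E] [CompleteSpace F]
    {T : ℓ²(ℕ, E) →L[𝕜] ℓ²(ℕ, F)} {U : ℓ²(ℕ, F) →L[𝕜] ℓ²(ℕ, E)} {a : ℕ → ℕ → E →L[𝕜] F}
    {b : ℕ → ℕ → F →L[𝕜] E} (hT : HasEntries T a) (hU : HasEntries U b)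
    (hab : ∀ i k, i ≠ 0 ∨ k ≠ 0 → a i k = (b k i)†) (v : ℓ²(ℕ, E)) (w : ℓ²(ℕ, F)) :
    ⟪T v, w⟫_𝕜 = ⟪v, U w⟫_𝕜 + ⟪(a 0 0 - (b 0 0)†) (v 0), w 0⟫_𝕜 := by
  have hcorner : T - U† = singleContinuousLinearMap 𝕜 (fun _ : ℕ => F) 2 0 ∘L
      (a 0 0 - (b 0 0)†) ∘L evalCLM 𝕜 (fun _ : ℕ => E) 2 0 := by
    refine (hT.sub hU.adjoint).ext fun i k x => ?_
    by_cases hik : i = 0 ∧ k = 0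
    · obtain ⟨rfl, rfl⟩ := hik
      simp [evalCLM]
    · rw [not_and_or] at hik
      rcases hik with hi | hk
      · simp [evalCLM, hab i k (.inl hi), Pi.single_apply, hi]
      · simp [evalCLM, hab i k (.inr hk), hk]
  calc ⟪T v, w⟫_𝕜 = ⟪v, U w⟫_𝕜 + ⟪(T - U†) v, w⟫_𝕜 := by
        rw [sub_apply, inner_sub_left, adjoint_inner_left, add_sub_cancel]
    _ = ⟪v, U w⟫_𝕜 + ⟪(a 0 0 - (b 0 0)†) (v 0), w 0⟫_𝕜 := by
        rw [hcorner]
        exact congrArg _ (lp.inner_single_left _ _ _)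

end Hilbert

end lp

open lp

section YuleWalker

variable {𝕜 E F : Type*} [RCLike 𝕜]
  [NormedAddCommGroup E] [InnerProductSpace 𝕜 E] [CompleteSpace E]
  [NormedAddCommGroup F] [InnerProductSpace 𝕜 F] [CompleteSpace F]

lemma inner_forwardShift_eq_of_yuleWalker {T : ℓ²(ℕ, E) →L[𝕜] ℓ²(ℕ, F)} {N : ℕ} (hN : 0 < N)
    (hT : T† ∘L forwardShift 𝕜 N = backwardShift 𝕜 N ∘L T†) {b a : ℓ²(ℕ, F)} {d c : ℓ²(ℕ, E)}
    (hbd : ∀ j, j ≠ 0 → ((T†) b + d) j = 0) (hac : ∀ i, i ≠ 0 → (a + T c) i = 0) :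
    ⟪forwardShift 𝕜 N b, a⟫_𝕜 = ⟪d, forwardShift 𝕜 N c⟫_𝕜 := by
  have hS_ac : backwardShift 𝕜 N (a + T c) = 0 := backwardShift_eq_zero hN hac
  have hS_bd : backwardShift 𝕜 N ((T†) b + d) = 0 := backwardShift_eq_zero hN hbd
  have hTS : (T†) (forwardShift 𝕜 N b) = backwardShift 𝕜 N ((T†) b) := congrArg (· b) hT
  calc ⟪forwardShift 𝕜 N b, a⟫_𝕜
      = ⟪b, backwardShift 𝕜 N (a + T c)⟫_𝕜 - ⟪(T†) (forwardShift 𝕜 N b), c⟫_𝕜 := by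
        simp only [forwardShift, map_add, inner_add_right, adjoint_inner_left]
        ring
    _ = ⟪backwardShift 𝕜 N d, c⟫_𝕜 - ⟪backwardShift 𝕜 N ((T†) b + d), c⟫_𝕜 := by
        rw [hS_ac, hTS, map_add, inner_add_left]
        simp
    _ = ⟪d, forwardShift 𝕜 N c⟫_𝕜 := by
        rw [hS_bd, inner_zero_left, sub_zero, forwardShift, adjoint_inner_right]

lemma inner_apply_neg_eq_of_yuleWalker {T : ℓ²(ℕ, E) →L[𝕜] ℓ²(ℕ, F)} {Φ Ψ : ℤ → E →L[𝕜] F}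
    (hΦ : HasEntries T fun i k => Φ (i + k)) (hΨ : HasEntries (T†) fun i k => (Ψ (i + k))†)
    {N : ℕ} (hN : 0 < N) (hΦΨ : ∀ m : ℤ, -N < m → Φ m = Ψ m)
    {b a : ℓ²(ℕ, F)} {d c : ℓ²(ℕ, E)} (hTd : T d = -b) (hTa : (T†) a = -c)
    (hbd : ∀ j, j ≠ 0 → ((T†) b + d) j = 0) (hac : ∀ i, i ≠ 0 → (a + T c) i = 0)
    (hΦd : ∀ j : ℤ, j < 0 → HasSum (fun k : ℕ => Φ (j + k) (d k)) 0)
    (hΨa : ∀ j : ℤ, j < 0 → HasSum (fun k : ℕ => ((Ψ (j + k))†) (a k)) 0) :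
    ⟪Φ (-N) (d 0), a 0⟫_𝕜 = ⟪Ψ (-N) (d 0), a 0⟫_𝕜 := by
  obtain ⟨TN, hTN⟩ := hΦ.exists_sub N
  obtain ⟨UN, hUN⟩ := hΨ.exists_sub (Φ := fun m => (Ψ m)†) N
  have hcorner := hTN.inner_apply_eq_inner_apply_add hUN (fun i k hik => by
    rw [adjoint_adjoint, add_comm (k : ℤ), hΦΨ]
    omega) d a
  have hshift := inner_forwardShift_eq_of_yuleWalker hN
    (hΨ.comp_forwardShift (Φ := fun m => (Ψ m)†) N) hbd hac
  rw [hΦ.apply_eq_forwardShift hTN hΦd, hΨ.apply_eq_forwardShift (Φ := fun m => (Ψ m)†) hUN hΨa,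
    hTd, hTa, map_neg, map_neg, inner_neg_left, inner_neg_right, hshift, adjoint_adjoint] at hcorner
  simpa [sub_apply, inner_sub_left, sub_eq_zero] using hcorner

end YuleWalker

lemma eq_of_natCast_eq_of_neg_step {α : Sort*} {f g : ℤ → α} (h₀ : ∀ n : ℕ, f n = g n)
    (hstep : ∀ N : ℕ, 0 < N → (∀ m : ℤ, -N < m → f m = g m) → f (-N) = g (-N)) : f = g := by
  suffices h : ∀ N : ℕ, ∀ m : ℤ, -N ≤ m → f m = g m from funext fun j => h j.natAbs j (by omega)
  intro N
  induction N with
  | zero =>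
    intro m hm
    lift m to ℕ using by simpa using hm
    exact h₀ m
  | succ N ih =>
    intro m hm
    obtain hm | rfl : -N ≤ m ∨ m = -(N + 1 : ℕ) := by omega
    · exact ih m hm
    exact hstep (N + 1) N.succ_pos fun m hm => ih m (by omega)

lemma hasSum_zero_of_hasSum_succ {M : Type*} [AddCommGroup M] [TopologicalSpace M]
    [IsTopologicalAddGroup M] {g : ℤ → ℕ → M} {j : ℤ}
    (h : HasSum (fun t : ℕ => g (j + 1 + t) (t + 1)) (-g j 0)) :
    HasSum (fun k : ℕ => g (j + k) k) 0 := by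
  refine (hasSum_nat_add_iff' 1).mp ?_
  convert h using 2 with t
  · push_cast
    ring_nf
  · simp

variable {K H : Type*}
  [NormedAddCommGroup K] [InnerProductSpace ℂ K] [CompleteSpace K]
  [NormedAddCommGroup H] [InnerProductSpace ℂ H] [CompleteSpace H]

-- Column indices `j ∈ -ℕ₀` are encoded by `j ∈ ℕ`, so the Hankel entry `(Hk)_{i,j}` is `Γ (i + j)`.
theorem one_variable_nehari_two_constructions_agree_general
    (Γ : ℕ → (K →L[ℂ] H))
    (Hk : lp (fun _ : ℕ => K) 2 →L[ℂ] lp (fun _ : ℕ => H) 2)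
    (hHkent : ∀ (i j : ℕ) (x : K), (Hk (lp.single 2 j x) : (ℕ → H)) i = Γ (i + j) x)
    -- first Yule–Walker system: (B, D, Δ), D has components Dc with Dc 0 = I
    (B : K →L[ℂ] lp (fun _ : ℕ => H) 2)
    (D : K →L[ℂ] lp (fun _ : ℕ => K) 2)
    (Dc : ℕ → (K →L[ℂ] K))
    (hD : ∀ (x : K) (j : ℕ), (D x : (ℕ → K)) j = Dc j x)
    (hD0 : Dc 0 = ContinuousLinearMap.id ℂ K)
    (hYW1 : B + Hk ∘L D = 0)
    (hYW2 : ∀ (x : K) (j : ℕ), j ≠ 0 →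
      (((ContinuousLinearMap.adjoint Hk) ∘L B + D) x : (ℕ → K)) j = 0)
    -- second Yule–Walker system: (A, C, α), A has components Ac with Ac 0 = I
    (A : H →L[ℂ] lp (fun _ : ℕ => H) 2)
    (C : H →L[ℂ] lp (fun _ : ℕ => K) 2)
    (Ac : ℕ → (H →L[ℂ] H))
    (hA : ∀ (y : H) (i : ℕ), (A y : (ℕ → H)) i = Ac i y)
    (hA0 : Ac 0 = ContinuousLinearMap.id ℂ H)
    (hYW3 : ∀ (y : H) (i : ℕ), i ≠ 0 → ((A + Hk ∘L C) y : (ℕ → H)) i = 0)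
    (hYW4 : (ContinuousLinearMap.adjoint Hk) ∘L A + C = 0)
    -- the two recursively defined extensions (each series assumed pointwise convergent)
    (Γe Γe' : ℤ → (K →L[ℂ] H))
    (hpos : ∀ i : ℕ, Γe (i : ℤ) = Γ i)
    (hpos' : ∀ i : ℕ, Γe' (i : ℤ) = Γ i)
    -- Γ_j x = -Σ_{k=1}^∞ Γ_{j+k} (D_{-k} x)
    (hrec : ∀ j : ℤ, j ≤ -1 → ∀ x : K,
      HasSum (fun t : ℕ => Γe (j + 1 + (t : ℤ)) (Dc (t + 1) x)) (-(Γe j x)))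
    -- (Γ'_j)* y = -Σ_{k=1}^∞ (Γ'_{j+k})* (A_k y)
    (hrec' : ∀ j : ℤ, j ≤ -1 → ∀ y : H,
      HasSum (fun t : ℕ =>
        (ContinuousLinearMap.adjoint (Γe' (j + 1 + (t : ℤ)))) (Ac (t + 1) y))
        (-((ContinuousLinearMap.adjoint (Γe' j)) y))) :
    ∀ j : ℤ, Γe j = Γe' j := by
  have hHk : ∀ Φ : ℤ → K →L[ℂ] H, (∀ i : ℕ, Φ i = Γ i) →
      HasEntries Hk fun i k => Φ (i + k) := fun Φ hΦ i k x => by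
    rw [hHkent, ← hΦ]
    push_cast
    rfl
  have hHk' : HasEntries (Hk†) fun i k => (Γe' (i + k))† := fun i k y => by
    simpa only [add_comm] using (hHk Γe' hpos').adjoint i k y
  have hΦd : ∀ x, ∀ j : ℤ, j < 0 → HasSum (fun k : ℕ => Γe (j + k) (D x k)) 0 :=
    fun x j hj => hasSum_zero_of_hasSum_succ (g := fun m k => Γe m (D x k)) <| by
      simpa [hD, hD0] using hrec j (by omega) x
  have hΨa : ∀ y, ∀ j : ℤ, j < 0 → HasSum (fun k : ℕ => ((Γe' (j + k))†) (A y k)) 0 :=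
    fun y j hj => hasSum_zero_of_hasSum_succ (g := fun m k => ((Γe' m)†) (A y k)) <| by
      simpa [hA, hA0] using hrec' j (by omega) y
  refine congrFun (eq_of_natCast_eq_of_neg_step (fun n => (hpos n).trans (hpos' n).symm)
    fun N hN ih => ContinuousLinearMap.ext fun x => ext_inner_right ℂ fun y => ?_)
  simpa [hD, hD0, hA, hA0] using inner_apply_neg_eq_of_yuleWalker (hHk Γe hpos) hHk' hN ih
    (b := B x) (c := C y) (by simpa [eq_neg_iff_add_eq_zero, add_comm] using congr($hYW1 x))
    (by simpa [eq_neg_iff_add_eq_zero] using congr($hYW4 y))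
    (by simpa using hYW2 x) (by simpa using hYW3 y) (hΦd x) (hΨa y)

theorem one_variable_nehari_two_constructions_agree
    (Γ : ℕ → (K →L[ℂ] H))
    (Hk : lp (fun _ : ℕ => K) 2 →L[ℂ] lp (fun _ : ℕ => H) 2)
    (hHknorm : ‖Hk‖ < 1)
    (hHkent : ∀ (i j : ℕ) (x : K), (Hk (lp.single 2 j x) : (ℕ → H)) i = Γ (i + j) x)
    -- first Yule–Walker system: (B, D, Δ), D has components Dc with Dc 0 = I
    (B : K →L[ℂ] lp (fun _ : ℕ => H) 2)
    (D : K →L[ℂ] lp (fun _ : ℕ => K) 2)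
    (Dc : ℕ → (K →L[ℂ] K))
    (hD : ∀ (x : K) (j : ℕ), (D x : (ℕ → K)) j = Dc j x)
    (hD0 : Dc 0 = ContinuousLinearMap.id ℂ K)
    (hYW1 : B + Hk ∘L D = 0)
    (hYW2 : ∀ (x : K) (j : ℕ), j ≠ 0 →
      (((ContinuousLinearMap.adjoint Hk) ∘L B + D) x : (ℕ → K)) j = 0)
    -- second Yule–Walker system: (A, C, α), A has components Ac with Ac 0 = I
    (A : H →L[ℂ] lp (fun _ : ℕ => H) 2)
    (C : H →L[ℂ] lp (fun _ : ℕ => K) 2)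
    (Ac : ℕ → (H →L[ℂ] H))
    (hA : ∀ (y : H) (i : ℕ), (A y : (ℕ → H)) i = Ac i y)
    (hA0 : Ac 0 = ContinuousLinearMap.id ℂ H)
    (hYW3 : ∀ (y : H) (i : ℕ), i ≠ 0 → ((A + Hk ∘L C) y : (ℕ → H)) i = 0)
    (hYW4 : (ContinuousLinearMap.adjoint Hk) ∘L A + C = 0)
    -- the two recursively defined extensions (each series assumed pointwise convergent)
    (Γe Γe' : ℤ → (K →L[ℂ] H))
    (hpos : ∀ i : ℕ, Γe (i : ℤ) = Γ i)
    (hpos' : ∀ i : ℕ, Γe' (i : ℤ) = Γ i)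
    -- Γ_j x = -Σ_{k=1}^∞ Γ_{j+k} (D_{-k} x)
    (hrec : ∀ j : ℤ, j ≤ -1 → ∀ x : K,
      HasSum (fun t : ℕ => Γe (j + 1 + (t : ℤ)) (Dc (t + 1) x)) (-(Γe j x)))
    -- (Γ'_j)* y = -Σ_{k=1}^∞ (Γ'_{j+k})* (A_k y)
    (hrec' : ∀ j : ℤ, j ≤ -1 → ∀ y : H,
      HasSum (fun t : ℕ =>
        (ContinuousLinearMap.adjoint (Γe' (j + 1 + (t : ℤ)))) (Ac (t + 1) y))
        (-((ContinuousLinearMap.adjoint (Γe' j)) y))) :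
    ∀ j : ℤ, Γe j = Γe' j :=
  one_variable_nehari_two_constructions_agree_general Γ Hk hHkent B D Dc hD hD0 hYW1 hYW2 A C Ac hA
    hA0 hYW3 hYW4 Γe Γe' hpos hpos' hrec hrec'
end
end

section
/- Let n, m ≥ 1, let H be a complex Hilbert space, and let c_{ij} ∈ B(H) for (i,j) ∈ {−n,…,n}×{−m,…,m} ∖ {(n,m),(−n,m),(n,−m),(−n,−m)} with c_{−i,−j} = c_{ij}*, and suppose Φ is invertible. Let S be an operator matrix with rows and columns indexed by E = {0,…,n−1}×{0,…,m−1}, with entries S_{k,l} ∈ B(H). Then: (a) if Φ₁ Φ⁻¹ S = S Φ⁻¹ Φ₁, then S_{(k₁,k₂),(l₁,l₂)} = S_{(k₁+1,k₂),(l₁+1,l₂)} whenever both index pairs lie in E (S is block Toeplitz in the first coordinate); (b) if Φ₂* Φ⁻¹ S = S Φ⁻¹ Φ₂*, then S_{(k₁,k₂),(l₁,l₂)} = S_{(k₁,k₂+1),(l₁,l₂+1)} whenever both index pairs lie in E (each block of S is Toeplitz in the second coordinate). In particular, if both intertwining relations hold then S is doubly Toeplitz: S_{k,l} depends only on k − l.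 -/
/- STATEMENT 15: intertwining with Φ₁Φ⁻¹ (resp. Φ₂*Φ⁻¹) forces an operator matrix S indexed
   by E = {0,…,n-1}×{0,…,m-1} to be block Toeplitz in the first coordinate (resp. Toeplitz in
   the second coordinate); if both hold, S is doubly Toeplitz. -/

noncomputable section

open ContinuousLinearMap Matrix

variable {H : Type*} [NormedAddCommGroup H] [InnerProductSpace ℂ H] [CompleteSpace H]

/-- Φ = (c_{k-l})_{k,l ∈ E}. -/
def PhiOpMat (n m : ℕ) (c : ℤ × ℤ → (H →L[ℂ] H)) :
    Matrix (Fin n × Fin m) (Fin n × Fin m) (H →L[ℂ] H) :=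
  Matrix.of fun k l => c ((k.1 : ℤ) - (l.1 : ℤ), (k.2 : ℤ) - (l.2 : ℤ))

/-- Φ₁ = (c_{k-l})_{k ∈ E, l ∈ {1,…,n}×{0,…,m-1}}. -/
def Phi1OpMat (n m : ℕ) (c : ℤ × ℤ → (H →L[ℂ] H)) :
    Matrix (Fin n × Fin m) (Fin n × Fin m) (H →L[ℂ] H) :=
  Matrix.of fun k l => c ((k.1 : ℤ) - (l.1 : ℤ) - 1, (k.2 : ℤ) - (l.2 : ℤ))

/-- Φ₂ = (c_{k-l})_{k ∈ E, l ∈ {0,…,n-1}×{1,…,m}}. -/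
def Phi2OpMat (n m : ℕ) (c : ℤ × ℤ → (H →L[ℂ] H)) :
    Matrix (Fin n × Fin m) (Fin n × Fin m) (H →L[ℂ] H) :=
  Matrix.of fun k l => c ((k.1 : ℤ) - (l.1 : ℤ), (k.2 : ℤ) - (l.2 : ℤ) - 1)

theorem intertwining_implies_doubly_toeplitz (n m : ℕ) (hn : 1 ≤ n) (hm : 1 ≤ m)
    (c : ℤ × ℤ → (H →L[ℂ] H))
    (hsym : ∀ k : ℤ × ℤ,
      |k.1| ≤ (n : ℤ) → |k.2| ≤ (m : ℤ) → ¬(|k.1| = (n : ℤ) ∧ |k.2| = (m : ℤ)) →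
        c (-k) = star (c k))
    (hinv : IsUnit (PhiOpMat n m c))
    (S : Matrix (Fin n × Fin m) (Fin n × Fin m) (H →L[ℂ] H)) :
    -- (a)
    ((Phi1OpMat n m c * Ring.inverse (PhiOpMat n m c) * S =
        S * Ring.inverse (PhiOpMat n m c) * Phi1OpMat n m c) →
      ∀ (k l : Fin n × Fin m) (hk : (k.1 : ℕ) + 1 < n) (hl : (l.1 : ℕ) + 1 < n),
        S k l = S (⟨(k.1 : ℕ) + 1, hk⟩, k.2) (⟨(l.1 : ℕ) + 1, hl⟩, l.2)) ∧
    -- (b)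
    (((Phi2OpMat n m c)ᴴ * Ring.inverse (PhiOpMat n m c) * S =
        S * Ring.inverse (PhiOpMat n m c) * (Phi2OpMat n m c)ᴴ) →
      ∀ (k l : Fin n × Fin m) (hk : (k.2 : ℕ) + 1 < m) (hl : (l.2 : ℕ) + 1 < m),
        S k l = S (k.1, ⟨(k.2 : ℕ) + 1, hk⟩) (l.1, ⟨(l.2 : ℕ) + 1, hl⟩)) ∧
    -- in particular: if both intertwinings hold, then S is doubly Toeplitz
    ((Phi1OpMat n m c * Ring.inverse (PhiOpMat n m c) * S =
        S * Ring.inverse (PhiOpMat n m c) * Phi1OpMat n m c) →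
     ((Phi2OpMat n m c)ᴴ * Ring.inverse (PhiOpMat n m c) * S =
        S * Ring.inverse (PhiOpMat n m c) * (Phi2OpMat n m c)ᴴ) →
      ∀ k l k' l' : Fin n × Fin m,
        (k.1 : ℤ) - (l.1 : ℤ) = (k'.1 : ℤ) - (l'.1 : ℤ) →
        (k.2 : ℤ) - (l.2 : ℤ) = (k'.2 : ℤ) - (l'.2 : ℤ) →
          S k l = S k' l') := by
  have h1 : Ring.inverse (PhiOpMat n m c) * PhiOpMat n m c = 1 :=
    Ring.inverse_mul_cancel _ hinv
  have h2 : PhiOpMat n m c * Ring.inverse (PhiOpMat n m c) = 1 :=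
    Ring.mul_inverse_cancel _ hinv
  set Φ := PhiOpMat (H := H) n m c with hΦdef
  set Φ₁ := Phi1OpMat (H := H) n m c with hΦ1def
  set Ψ := (Phi2OpMat (H := H) n m c)ᴴ with hΨdef
  set X := Ring.inverse Φ * S * Ring.inverse Φ with hXdef
  have hS : S = Φ * X * Φ := by
    rw [hXdef]
    calc S = Φ * Ring.inverse Φ * S * (Ring.inverse Φ * Φ) := by
            rw [h2, h1, one_mul, mul_one]
      _ = Φ * (Ring.inverse Φ * S * Ring.inverse Φ) * Φ := by
            simp only [mul_assoc]
  -- entry description of Ψ = Φ₂ᴴ via hsym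
  have hΨe : ∀ (k l : Fin n × Fin m),
      Ψ k l = c ((k.1 : ℤ) - (l.1 : ℤ), (k.2 : ℤ) - (l.2 : ℤ) + 1) := by
    intro k l
    have hk1 := k.1.isLt; have hk2 := k.2.isLt
    have hl1 := l.1.isLt; have hl2 := l.2.isLt
    have ha : |(l.1 : ℤ) - (k.1 : ℤ)| ≤ (n : ℤ) := by rw [abs_le]; omega
    have hb : |(l.2 : ℤ) - (k.2 : ℤ) - 1| ≤ (m : ℤ) := by rw [abs_le]; omega
    have hlt : |(l.1 : ℤ) - (k.1 : ℤ)| < (n : ℤ) := abs_lt.mpr ⟨by omega, by omega⟩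
    have hc : ¬(|(l.1 : ℤ) - (k.1 : ℤ)| = (n : ℤ) ∧ |(l.2 : ℤ) - (k.2 : ℤ) - 1| = (m : ℤ)) :=
      fun h => absurd h.1 (ne_of_lt hlt)
    have h5 := hsym ((l.1 : ℤ) - (k.1 : ℤ), (l.2 : ℤ) - (k.2 : ℤ) - 1) ha hb hc
    rw [Prod.neg_mk] at h5
    have h6 : ((-((l.1 : ℤ) - (k.1 : ℤ)), -((l.2 : ℤ) - (k.2 : ℤ) - 1)) : ℤ × ℤ)
        = ((k.1 : ℤ) - (l.1 : ℤ), (k.2 : ℤ) - (l.2 : ℤ) + 1) := by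
      rw [Prod.mk.injEq]; exact ⟨by ring, by ring⟩
    rw [h6] at h5
    rw [hΨdef, Matrix.conjTranspose_apply]
    rw [show Phi2OpMat (H := H) n m c l k
        = c ((l.1 : ℤ) - (k.1 : ℤ), (l.2 : ℤ) - (k.2 : ℤ) - 1) from rfl]
    exact h5.symm
  -- entry lemmas for part (a)
  have ent1 : ∀ (k : Fin n × Fin m) (hk : (k.1 : ℕ) + 1 < n) (i : Fin n × Fin m),
      Φ₁ ((⟨(k.1 : ℕ) + 1, hk⟩ : Fin n), k.2) i = Φ k i := by
    intro k hk i
    show Phi1OpMat n m c _ _ = PhiOpMat n m c _ _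
    simp only [Phi1OpMat, PhiOpMat, Matrix.of_apply]
    exact congrArg c (by rw [Prod.mk.injEq]; exact ⟨by push_cast; ring, rfl⟩)
  have ent2 : ∀ (l : Fin n × Fin m) (hl : (l.1 : ℕ) + 1 < n) (j : Fin n × Fin m),
      Φ₁ j l = Φ j ((⟨(l.1 : ℕ) + 1, hl⟩ : Fin n), l.2) := by
    intro l hl j
    show Phi1OpMat n m c _ _ = PhiOpMat n m c _ _
    simp only [Phi1OpMat, PhiOpMat, Matrix.of_apply]
    exact congrArg c (by rw [Prod.mk.injEq]; exact ⟨by push_cast; ring, rfl⟩)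
  -- entry lemmas for part (b)
  have entB1 : ∀ (k : Fin n × Fin m) (hk : (k.2 : ℕ) + 1 < m) (i : Fin n × Fin m),
      Ψ k i = Φ (k.1, (⟨(k.2 : ℕ) + 1, hk⟩ : Fin m)) i := by
    intro k hk i
    rw [hΨe]
    show _ = PhiOpMat n m c _ _
    simp only [PhiOpMat, Matrix.of_apply]
    exact congrArg c (by rw [Prod.mk.injEq]; exact ⟨rfl, by push_cast; ring⟩)
  have entB2 : ∀ (l : Fin n × Fin m) (hl : (l.2 : ℕ) + 1 < m) (j : Fin n × Fin m),
      Ψ j (l.1, (⟨(l.2 : ℕ) + 1, hl⟩ : Fin m)) = Φ j l := by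
    intro l hl j
    rw [hΨe]
    show _ = PhiOpMat n m c _ _
    simp only [PhiOpMat, Matrix.of_apply]
    exact congrArg c (by rw [Prod.mk.injEq]; exact ⟨rfl, by push_cast; ring⟩)
  -- part (a)
  have stepA : (Φ₁ * Ring.inverse Φ * S = S * Ring.inverse Φ * Φ₁) →
      ∀ (k l : Fin n × Fin m) (hk : (k.1 : ℕ) + 1 < n) (hl : (l.1 : ℕ) + 1 < n),
        S k l = S (⟨(k.1 : ℕ) + 1, hk⟩, k.2) (⟨(l.1 : ℕ) + 1, hl⟩, l.2) := by
    intro hA k l hk hl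
    have h' : Φ₁ * X * Φ = Φ * X * Φ₁ := by
      have e1 : Φ₁ * X * Φ = Φ₁ * Ring.inverse Φ * S := by
        rw [hXdef]; simp only [mul_assoc, h1, mul_one]
      have e2 : Φ * X * Φ₁ = S * Ring.inverse Φ * Φ₁ := by
        rw [hXdef]; simp only [← mul_assoc, h2, one_mul]
      rw [e1, e2, hA]
    have step1 : (Φ₁ * X * Φ) ((⟨(k.1 : ℕ) + 1, hk⟩ : Fin n), k.2) l = S k l := by
      conv_rhs => rw [hS]
      simp only [Matrix.mul_apply]
      refine Finset.sum_congr rfl fun j _ => ?_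
      congr 1
      refine Finset.sum_congr rfl fun i _ => ?_
      rw [ent1 k hk i]
    have step2 : (Φ * X * Φ₁) ((⟨(k.1 : ℕ) + 1, hk⟩ : Fin n), k.2) l
        = S (⟨(k.1 : ℕ) + 1, hk⟩, k.2) (⟨(l.1 : ℕ) + 1, hl⟩, l.2) := by
      conv_rhs => rw [hS]
      simp only [Matrix.mul_apply]
      refine Finset.sum_congr rfl fun j _ => ?_
      rw [ent2 l hl j]
    calc S k l = (Φ₁ * X * Φ) ((⟨(k.1 : ℕ) + 1, hk⟩ : Fin n), k.2) l := step1.symm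
      _ = (Φ * X * Φ₁) ((⟨(k.1 : ℕ) + 1, hk⟩ : Fin n), k.2) l := by rw [h']
      _ = S (⟨(k.1 : ℕ) + 1, hk⟩, k.2) (⟨(l.1 : ℕ) + 1, hl⟩, l.2) := step2
  -- part (b)
  have stepB : (Ψ * Ring.inverse Φ * S = S * Ring.inverse Φ * Ψ) →
      ∀ (k l : Fin n × Fin m) (hk : (k.2 : ℕ) + 1 < m) (hl : (l.2 : ℕ) + 1 < m),
        S k l = S (k.1, ⟨(k.2 : ℕ) + 1, hk⟩) (l.1, ⟨(l.2 : ℕ) + 1, hl⟩) := by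
    intro hB k l hk hl
    have h' : Ψ * X * Φ = Φ * X * Ψ := by
      have e1 : Ψ * X * Φ = Ψ * Ring.inverse Φ * S := by
        rw [hXdef]; simp only [mul_assoc, h1, mul_one]
      have e2 : Φ * X * Ψ = S * Ring.inverse Φ * Ψ := by
        rw [hXdef]; simp only [← mul_assoc, h2, one_mul]
      rw [e1, e2, hB]
    have step1 : (Ψ * X * Φ) k (l.1, (⟨(l.2 : ℕ) + 1, hl⟩ : Fin m))
        = S (k.1, ⟨(k.2 : ℕ) + 1, hk⟩) (l.1, ⟨(l.2 : ℕ) + 1, hl⟩) := by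
      conv_rhs => rw [hS]
      simp only [Matrix.mul_apply]
      refine Finset.sum_congr rfl fun j _ => ?_
      congr 1
      refine Finset.sum_congr rfl fun i _ => ?_
      rw [entB1 k hk i]
    have step2 : (Φ * X * Ψ) k (l.1, (⟨(l.2 : ℕ) + 1, hl⟩ : Fin m)) = S k l := by
      conv_rhs => rw [hS]
      simp only [Matrix.mul_apply]
      refine Finset.sum_congr rfl fun j _ => ?_
      rw [entB2 l hl j]
    calc S k l = (Φ * X * Ψ) k (l.1, (⟨(l.2 : ℕ) + 1, hl⟩ : Fin m)) := step2.symm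
      _ = (Ψ * X * Φ) k (l.1, (⟨(l.2 : ℕ) + 1, hl⟩ : Fin m)) := by rw [h']
      _ = S (k.1, ⟨(k.2 : ℕ) + 1, hk⟩) (l.1, ⟨(l.2 : ℕ) + 1, hl⟩) := step1
  refine ⟨stepA, stepB, ?_⟩
  intro hA hB k l k' l' hd1 hd2
  have sa := stepA hA
  have sb := stepB hB
  have shA : ∀ (t : ℕ) (k l : Fin n × Fin m) (hk : (k.1 : ℕ) + t < n)
      (hl : (l.1 : ℕ) + t < n),
      S k l = S (⟨(k.1 : ℕ) + t, hk⟩, k.2) (⟨(l.1 : ℕ) + t, hl⟩, l.2) := by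
    intro t
    induction t with
    | zero => intro k l hk hl; rfl
    | succ t ih =>
      intro k l hk hl
      have hk' : (k.1 : ℕ) + t < n := by omega
      have hl' : (l.1 : ℕ) + t < n := by omega
      rw [ih k l hk' hl']
      exact sa (⟨(k.1 : ℕ) + t, hk'⟩, k.2) (⟨(l.1 : ℕ) + t, hl'⟩, l.2) hk hl
  have shB : ∀ (t : ℕ) (k l : Fin n × Fin m) (hk : (k.2 : ℕ) + t < m)
      (hl : (l.2 : ℕ) + t < m),
      S k l = S (k.1, ⟨(k.2 : ℕ) + t, hk⟩) (l.1, ⟨(l.2 : ℕ) + t, hl⟩) := by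
    intro t
    induction t with
    | zero => intro k l hk hl; rfl
    | succ t ih =>
      intro k l hk hl
      have hk' : (k.2 : ℕ) + t < m := by omega
      have hl' : (l.2 : ℕ) + t < m := by omega
      rw [ih k l hk' hl']
      exact sb (k.1, ⟨(k.2 : ℕ) + t, hk'⟩) (l.1, ⟨(l.2 : ℕ) + t, hl'⟩) hk hl
  have fA : ∀ (k l k' l' : Fin n × Fin m), k.2 = k'.2 → l.2 = l'.2 →
      (k.1 : ℤ) - (l.1 : ℤ) = (k'.1 : ℤ) - (l'.1 : ℤ) → S k l = S k' l' := by
    intro k l k' l' e2k e2l hd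
    rcases le_total (k.1 : ℕ) (k'.1 : ℕ) with hle | hle
    · obtain ⟨t, ht⟩ : ∃ t, (k'.1 : ℕ) = (k.1 : ℕ) + t := ⟨(k'.1 : ℕ) - (k.1 : ℕ), by omega⟩
      have htl : (l'.1 : ℕ) = (l.1 : ℕ) + t := by omega
      have hk : (k.1 : ℕ) + t < n := by have := k'.1.isLt; omega
      have hl : (l.1 : ℕ) + t < n := by have := l'.1.isLt; omega
      rw [shA t k l hk hl]
      congr 1
      · exact Prod.ext (Fin.ext ht.symm) e2k
      · exact Prod.ext (Fin.ext htl.symm) e2l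
    · obtain ⟨t, ht⟩ : ∃ t, (k.1 : ℕ) = (k'.1 : ℕ) + t := ⟨(k.1 : ℕ) - (k'.1 : ℕ), by omega⟩
      have htl : (l.1 : ℕ) = (l'.1 : ℕ) + t := by omega
      have hk : (k'.1 : ℕ) + t < n := by have := k.1.isLt; omega
      have hl : (l'.1 : ℕ) + t < n := by have := l.1.isLt; omega
      rw [shA t k' l' hk hl]
      congr 1
      · exact Prod.ext (Fin.ext ht) e2k
      · exact Prod.ext (Fin.ext htl) e2l
  have fB : ∀ (k l k' l' : Fin n × Fin m), k.1 = k'.1 → l.1 = l'.1 →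
      (k.2 : ℤ) - (l.2 : ℤ) = (k'.2 : ℤ) - (l'.2 : ℤ) → S k l = S k' l' := by
    intro k l k' l' e1k e1l hd
    rcases le_total (k.2 : ℕ) (k'.2 : ℕ) with hle | hle
    · obtain ⟨t, ht⟩ : ∃ t, (k'.2 : ℕ) = (k.2 : ℕ) + t := ⟨(k'.2 : ℕ) - (k.2 : ℕ), by omega⟩
      have htl : (l'.2 : ℕ) = (l.2 : ℕ) + t := by omega
      have hk : (k.2 : ℕ) + t < m := by have := k'.2.isLt; omega
      have hl : (l.2 : ℕ) + t < m := by have := l'.2.isLt; omega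
      rw [shB t k l hk hl]
      congr 1
      · exact Prod.ext e1k (Fin.ext ht.symm)
      · exact Prod.ext e1l (Fin.ext htl.symm)
    · obtain ⟨t, ht⟩ : ∃ t, (k.2 : ℕ) = (k'.2 : ℕ) + t := ⟨(k.2 : ℕ) - (k'.2 : ℕ), by omega⟩
      have htl : (l.2 : ℕ) = (l'.2 : ℕ) + t := by omega
      have hk : (k'.2 : ℕ) + t < m := by have := k.2.isLt; omega
      have hl : (l'.2 : ℕ) + t < m := by have := l.2.isLt; omega
      rw [shB t k' l' hk hl]
      congr 1
      · exact Prod.ext e1k (Fin.ext ht)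
      · exact Prod.ext e1l (Fin.ext htl)
  calc S k l = S (k'.1, k.2) (l'.1, l.2) := fA k l (k'.1, k.2) (l'.1, l.2) rfl rfl hd1
    _ = S k' l' := fB (k'.1, k.2) (l'.1, l.2) k' l' rfl rfl hd2
end
end

section
/- Let H be a complex Hilbert space, n, m ≥ 0, and let p(z,w) = Σ_{i=0}^n Σ_{j=0}^m p_{ij} z^i w^j and r(z,w) = Σ_{i=0}^n Σ_{j=0}^m r_{ij} z^i w^j be stable polynomials with coefficients in B(H) such that p₀₀ is positive definite and (p(z,w)⁻¹)* p(z,w)⁻¹ = r(z,w)⁻¹ (r(z,w)⁻¹)* for all (z,w) ∈ 𝕋². Write p(z,w) = Σ_{i=0}^m p_i(z) w^i and r(z,w) = Σ_{i=0}^m r_i(z) w^i, with the convention p_i(z) = r_i(z) = 0 for i < 0 or i > m. Fix k ≥ m−1. For z ∈ ℂ∖{0} let E_k(z) = P⁽ᵏ⁾(z)·(P⁽ᵏ⁾(1/conj(z)))* − (R⁽ᵏ⁾(1/conj(z)))*·R⁽ᵏ⁾(z), where P⁽ᵏ⁾(z) is the (k+1)×(k+1) lower triangular block Toeplitz matrix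 with (i,j) entry p_{i−j}(z) and R⁽ᵏ⁾(z) is the (k+1)×(k+1) upper triangular block Toeplitz matrix with (i,j) entry r_{k+1+i−j}(z), 0 ≤ i,j ≤ k; define E_{k+1}(z) analogously with k replaced by k+1. Suppose M_k(z) is a (k+1)×(k+1) operator-matrix polynomial such that M_k is stable, M_k(z)·(M_k(1/conj(z)))* = E_k(z) for all z ≠ 0, and M_k(0) is lower triangular with positive definite diagonal entries. Define the (k+2)×(k+2) operator-matrix polynomial M_{k+1}(z) with block form M_{k+1}(z) = [[p_0(z), 0],[col(p_1(z),…,p_{k+1}(z)), M_k(z)]]. Then M_{k+1} is stable, M_{k+1}(z)·(M_{k+1}(1/conj(z)))* = E_{k+1}(z) for all z ≠ 0, and M_{k+1}(0) is lower triangular with positive definite diagonal entries; i.e., M_{k+1} is the left stable factor of E_{k+1}. -/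
/- STATEMENT 16: the recursion for the left stable factors M_k of E_k
   (equation (ttten) of the paper): if M_k is the left stable factor of E_k, then
   M_{k+1}(z) = [[p₀(z), 0], [col(p₁(z),…,p_{k+1}(z)), M_k(z)]] is the left stable
   factor of E_{k+1}. -/

noncomputable section

open ContinuousLinearMap Matrix

variable {H : Type*} [NormedAddCommGroup H] [InnerProductSpace ℂ H] [CompleteSpace H]

/-- A bounded operator is positive definite: self-adjoint and bounded below by `ε·I`. -/
def IsPosDefOp (T : H →L[ℂ] H) : Prop :=
  IsSelfAdjoint T ∧ ∃ ε : ℝ, 0 < ε ∧ ∀ x : H, ε * ‖x‖ ^ 2 ≤ (inner ℂ (T x) x : ℂ).re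

/-- The coefficient polynomial p_i(z) = Σ_{l=0}^n p_{l i} z^l of w^i in p(z,w), with the
convention p_i = 0 for i < 0 or i > m. -/
def wCoeff {n m : ℕ} (p : Fin (n+1) → Fin (m+1) → (H →L[ℂ] H)) (i : ℤ) (z : ℂ) :
    H →L[ℂ] H :=
  if h : 0 ≤ i ∧ i ≤ (m : ℤ) then
    ∑ l : Fin (n+1), z ^ (l : ℕ) • p l ⟨i.toNat, by omega⟩
  else 0

/-- The (k+1)×(k+1) lower triangular block Toeplitz matrix P⁽ᵏ⁾(z) with (i,j) entry
p_{i-j}(z). -/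
def Pmat {n m : ℕ} (p : Fin (n+1) → Fin (m+1) → (H →L[ℂ] H)) (k : ℕ) (z : ℂ) :
    Matrix (Fin (k+1)) (Fin (k+1)) (H →L[ℂ] H) :=
  Matrix.of fun i j => wCoeff p ((i : ℤ) - (j : ℤ)) z

/-- The (k+1)×(k+1) upper triangular block Toeplitz matrix R⁽ᵏ⁾(z) with (i,j) entry
r_{k+1+i-j}(z). -/
def Rmat {n m : ℕ} (r : Fin (n+1) → Fin (m+1) → (H →L[ℂ] H)) (k : ℕ) (z : ℂ) :
    Matrix (Fin (k+1)) (Fin (k+1)) (H →L[ℂ] H) :=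
  Matrix.of fun i j => wCoeff r ((k : ℤ) + 1 + (i : ℤ) - (j : ℤ)) z

/-- E_k(z) = P⁽ᵏ⁾(z)·(P⁽ᵏ⁾(1/conj z))* − (R⁽ᵏ⁾(1/conj z))*·R⁽ᵏ⁾(z). -/
def Emat {n m : ℕ} (p r : Fin (n+1) → Fin (m+1) → (H →L[ℂ] H)) (k : ℕ) (z : ℂ) :
    Matrix (Fin (k+1)) (Fin (k+1)) (H →L[ℂ] H) :=
  Pmat p k z * (Pmat p k ((starRingEnd ℂ z)⁻¹))ᴴ -
    (Rmat r k ((starRingEnd ℂ z)⁻¹))ᴴ * Rmat r k z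

/-! Split off the first row and column. Then `P⁽ᵏ⁺¹⁾` and `M_{k+1}` arise from `P⁽ᵏ⁾` and `M_k` by
the same bordering `B(X) = [[p₀, 0], [col(p₁, …, p_{k+1}), X]]`, while
`R⁽ᵏ⁺¹⁾ = [[0, R⁽ᵏ⁾], [0, 0]]` since `r_l = 0` for `l > m`. As
`B(X) B(X')* − B(Y) B(Y')* = diag(0, X X'* − Y Y'*)`, the factorization `M_k M_k'* = E_k` lifts to
`M_{k+1} M_{k+1}'* = E_{k+1}`. Invertibility and the triangular structure at `0` are inherited
blockwise, using that `p₀(z) = p(z, 0)` is invertible and `p₀(0) = p₀₀`. -/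

namespace Matrix

variable {α l n : Type*}

theorem isUnit_fromBlocks_zero₁₂_of_isUnit [Ring α] [Fintype l] [Fintype n] [DecidableEq l]
    [DecidableEq n] {A : Matrix l l α} {C : Matrix n l α} {D : Matrix n n α}
    (hA : IsUnit A) (hD : IsUnit D) : IsUnit (fromBlocks A 0 C D) := by
  obtain ⟨_⟩ := hA.nonempty_invertible
  obtain ⟨_⟩ := hD.nonempty_invertible
  refine isUnit_iff_exists.mpr ⟨fromBlocks (⅟A) 0 (-(⅟D * C * ⅟A)) (⅟D), ?_, ?_⟩
  · simp [fromBlocks_multiply, ← Matrix.mul_assoc]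
  · simp [fromBlocks_multiply, Matrix.mul_assoc]

theorem fromBlocks_zero₁₂_mul_conjTranspose_sub [Ring α] [StarRing α] [Fintype l] [Fintype n]
    (A A' : Matrix l l α) (C C' : Matrix n l α) (D D' E E' : Matrix n n α) :
    fromBlocks A 0 C D * (fromBlocks A' 0 C' D')ᴴ - fromBlocks A 0 C E * (fromBlocks A' 0 C' E')ᴴ =
      fromBlocks 0 0 0 (D * D'ᴴ - E * E'ᴴ) := by
  simp only [fromBlocks_conjTranspose, fromBlocks_multiply, sub_eq_add_neg, fromBlocks_neg,
    fromBlocks_add, conjTranspose_zero, Matrix.mul_zero, Matrix.zero_mul, add_zero]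
  congr 1 <;> abel

theorem conjTranspose_fromBlocks₁₂_mul_fromBlocks₁₂ {m o : Type*} [Semiring α] [StarRing α]
    [Fintype m] [Fintype o] (B B' : Matrix m n α) :
    (fromBlocks 0 B 0 0 : Matrix (m ⊕ o) (l ⊕ n) α)ᴴ *
        (fromBlocks 0 B' 0 0 : Matrix (m ⊕ o) (l ⊕ n) α) =
      fromBlocks 0 0 0 (Bᴴ * B') := by
  simp [fromBlocks_conjTranspose, fromBlocks_multiply]

end Matrix

def finSuccEquivSum (n : ℕ) : Fin (n + 1) ≃ Fin 1 ⊕ Fin n where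
  toFun := Fin.cases (Sum.inl 0) Sum.inr
  invFun := Sum.elim (fun _ => 0) Fin.succ
  left_inv i := by cases i using Fin.cases <;> rfl
  right_inv x := by
    rcases x with x | x
    · rw [Subsingleton.elim x 0]; rfl
    · rfl

@[simp] theorem finSuccEquivSum_zero (n : ℕ) : finSuccEquivSum n 0 = Sum.inl 0 := rfl

@[simp] theorem finSuccEquivSum_succ {n : ℕ} (i : Fin n) : finSuccEquivSum n i.succ = Sum.inr i :=
  rfl

section

variable {n m : ℕ}

section

omit [CompleteSpace H]

theorem wCoeff_eq_zero (p : Fin (n+1) → Fin (m+1) → (H →L[ℂ] H)) {i : ℤ}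
    (hi : i < 0 ∨ (m : ℤ) < i) (z : ℂ) : wCoeff p i z = 0 :=
  dif_neg (by omega)

theorem polyEval2_zero_right (p : Fin (n+1) → Fin (m+1) → (H →L[ℂ] H)) (z : ℂ) :
    polyEval2 p z 0 = wCoeff p 0 z := by
  rw [polyEval2, wCoeff, dif_pos ⟨le_refl 0, by positivity⟩]
  refine Finset.sum_congr rfl fun l _ => ?_
  simp [Fin.sum_univ_succ]

theorem wCoeff_zero_zero (p : Fin (n+1) → Fin (m+1) → (H →L[ℂ] H)) :
    wCoeff p 0 (0 : ℂ) = p 0 0 := by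
  simp [wCoeff, Fin.sum_univ_succ]

/-- The paper's `[[p₀(z), 0], [col(p₁(z), …, p_{k+1}(z)), M]]`. -/
def bordered (p : Fin (n+1) → Fin (m+1) → (H →L[ℂ] H)) (k : ℕ) (z : ℂ)
    (M : Matrix (Fin (k+1)) (Fin (k+1)) (H →L[ℂ] H)) :
    Matrix (Fin (k+2)) (Fin (k+2)) (H →L[ℂ] H) :=
  (fromBlocks (scalar (Fin 1) (wCoeff p 0 z)) 0
    (of fun (i : Fin (k+1)) _ => wCoeff p ((i : ℤ) + 1) z) M).submatrix
      (finSuccEquivSum _) (finSuccEquivSum _)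

section

variable (p : Fin (n+1) → Fin (m+1) → (H →L[ℂ] H)) {k : ℕ} (z : ℂ)
  (M : Matrix (Fin (k+1)) (Fin (k+1)) (H →L[ℂ] H))

@[simp] theorem bordered_zero_zero : bordered p k z M 0 0 = wCoeff p 0 z := by
  simp [bordered]

@[simp] theorem bordered_zero_succ (j : Fin (k+1)) : bordered p k z M 0 j.succ = 0 := rfl

@[simp] theorem bordered_succ_zero (i : Fin (k+1)) :
    bordered p k z M i.succ 0 = wCoeff p ((i : ℤ) + 1) z := rfl

@[simp] theorem bordered_succ_succ (i j : Fin (k+1)) : bordered p k z M i.succ j.succ = M i j :=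
  rfl

theorem Pmat_succ : Pmat p (k+1) z = bordered p k z (Pmat p k z) := by
  ext i j : 1
  cases i using Fin.cases <;> cases j using Fin.cases
  case zero.succ j =>
    simp only [Pmat, of_apply, bordered_zero_succ]
    exact wCoeff_eq_zero p (by simp; omega) z
  all_goals simp [Pmat]

end

theorem isUnit_bordered {k : ℕ} {p : Fin (n+1) → Fin (m+1) → (H →L[ℂ] H)} {z : ℂ}
    {M : Matrix (Fin (k+1)) (Fin (k+1)) (H →L[ℂ] H)} (hp : IsUnit (wCoeff p 0 z))
    (hM : IsUnit M) : IsUnit (bordered p k z M) :=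
  (isUnit_fromBlocks_zero₁₂_of_isUnit (hp.map (scalar (Fin 1))) hM).map
    (reindexRingEquiv _ (finSuccEquivSum (k+1)).symm)

theorem Rmat_succ (r : Fin (n+1) → Fin (m+1) → (H →L[ℂ] H)) {k : ℕ} (hm : m ≤ k + 1) (z : ℂ) :
    Rmat r (k+1) z = (fromBlocks 0 (Rmat r k z) 0 0 :
      Matrix (Fin (k+1) ⊕ Fin 1) (Fin 1 ⊕ Fin (k+1)) (H →L[ℂ] H)).submatrix
        finSumFinEquiv.symm (finSuccEquivSum _) := by
  ext i j : 1
  cases i using Fin.lastCases <;> cases j using Fin.cases <;>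
    simp only [Rmat, of_apply, submatrix_apply, finSumFinEquiv_symm_last,
      finSumFinEquiv_symm_apply_castSucc, finSuccEquivSum_zero, finSuccEquivSum_succ,
      fromBlocks_apply₁₁, fromBlocks_apply₁₂, fromBlocks_apply₂₁, fromBlocks_apply₂₂,
      Matrix.zero_apply]
  case cast.succ i j =>
    congr 1
    simp only [Fin.val_castSucc, Fin.val_succ]
    push_cast
    ring
  all_goals exact wCoeff_eq_zero r (by simp; omega) z

end

theorem bordered_mul_conjTranspose_sub (p : Fin (n+1) → Fin (m+1) → (H →L[ℂ] H)) {k : ℕ}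
    (z w : ℂ) (M M' N N' : Matrix (Fin (k+1)) (Fin (k+1)) (H →L[ℂ] H)) :
    bordered p k z M * (bordered p k w M')ᴴ - bordered p k z N * (bordered p k w N')ᴴ =
      (fromBlocks 0 0 0 (M * M'ᴴ - N * N'ᴴ)).submatrix (finSuccEquivSum _) (finSuccEquivSum _) := by
  rw [← fromBlocks_zero₁₂_mul_conjTranspose_sub]
  simp only [bordered, conjTranspose_submatrix, submatrix_mul_equiv]
  rfl

theorem Emat_succ (p r : Fin (n+1) → Fin (m+1) → (H →L[ℂ] H)) {k : ℕ}
    (hm : m ≤ k + 1) {z : ℂ} {M M' : Matrix (Fin (k+1)) (Fin (k+1)) (H →L[ℂ] H)}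
    (hM : M * M'ᴴ = Emat p r k z) :
    Emat p r (k+1) z = bordered p k z M * (bordered p k (starRingEnd ℂ z)⁻¹ M')ᴴ := by
  set w := (starRingEnd ℂ z)⁻¹
  have hR : (Rmat r (k+1) w)ᴴ * Rmat r (k+1) z =
      (fromBlocks 0 0 0 ((Rmat r k w)ᴴ * Rmat r k z)).submatrix
        (finSuccEquivSum _) (finSuccEquivSum _) := by
    rw [Rmat_succ r hm, Rmat_succ r hm, conjTranspose_submatrix, submatrix_mul_equiv,
      conjTranspose_fromBlocks₁₂_mul_fromBlocks₁₂]
  rw [Emat, Pmat_succ, Pmat_succ, hR, sub_eq_iff_eq_add', ← sub_eq_iff_eq_add,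
    bordered_mul_conjTranspose_sub, hM, Emat, sub_sub_cancel]

end

theorem left_stable_factor_recursion (n m : ℕ)
    (p r : Fin (n+1) → Fin (m+1) → (H →L[ℂ] H))
    (hpstable : ∀ z w : ℂ, ‖z‖ ≤ 1 → ‖w‖ ≤ 1 → IsUnit (polyEval2 p z w))
    (hp00 : IsPosDefOp (p 0 0))
    (k : ℕ) (hk : m ≤ k + 1)
    -- M_k : an operator-matrix polynomial …
    (Mk : ℂ → Matrix (Fin (k+1)) (Fin (k+1)) (H →L[ℂ] H))
    -- … which is stable, …
    (hMkstable : ∀ z : ℂ, ‖z‖ ≤ 1 → IsUnit (Mk z))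
    -- … factors E_k, …
    (hMkfact : ∀ z : ℂ, z ≠ 0 → Mk z * (Mk ((starRingEnd ℂ z)⁻¹))ᴴ = Emat p r k z)
    -- … and with M_k(0) lower triangular with positive definite diagonal entries
    (hMktri : ∀ i j : Fin (k+1), i < j → Mk 0 i j = 0)
    (hMkdiag : ∀ i : Fin (k+1), IsPosDefOp (Mk 0 i i))
    -- M_{k+1}(z) = [[p₀(z), 0],[col(p₁(z),…,p_{k+1}(z)), M_k(z)]]
    (Mk1 : ℂ → Matrix (Fin (k+2)) (Fin (k+2)) (H →L[ℂ] H))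
    (hMk1 : ∀ (z : ℂ) (i j : Fin (k+2)), Mk1 z i j =
      if hi : (i : ℕ) = 0 then (if (j : ℕ) = 0 then wCoeff p 0 z else 0)
      else if hj : (j : ℕ) = 0 then wCoeff p (i : ℤ) z
      else Mk z ⟨(i : ℕ) - 1, by have := i.isLt; omega⟩ ⟨(j : ℕ) - 1, by have := j.isLt; omega⟩) :
    -- then M_{k+1} is the left stable factor of E_{k+1}:
    (∀ z : ℂ, ‖z‖ ≤ 1 → IsUnit (Mk1 z)) ∧
    (∀ z : ℂ, z ≠ 0 → Mk1 z * (Mk1 ((starRingEnd ℂ z)⁻¹))ᴴ = Emat p r (k+1) z) ∧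
    (∀ i j : Fin (k+2), i < j → Mk1 0 i j = 0) ∧
    (∀ i : Fin (k+2), IsPosDefOp (Mk1 0 i i)) := by
  have hbord (z : ℂ) : Mk1 z = bordered p k z (Mk z) := by
    ext i j : 1
    cases i using Fin.cases <;> cases j using Fin.cases <;> simp [hMk1]
  refine ⟨fun z hz => ?_, fun z hz => ?_, fun i j hij => ?_, fun i => ?_⟩
  · rw [hbord]
    exact isUnit_bordered (polyEval2_zero_right p z ▸ hpstable z 0 hz (by simp)) (hMkstable z hz)
  · rw [hbord, hbord, Emat_succ p r hk (hMkfact z hz)]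
  · rw [hbord]
    cases i using Fin.cases <;> cases j using Fin.cases
    case zero.succ j => exact bordered_zero_succ p 0 (Mk 0) j
    case succ.succ i j => exact hMktri i j (Fin.succ_lt_succ_iff.mp hij)
    all_goals simp at hij
  · rw [hbord]
    cases i using Fin.cases
    · simpa [wCoeff_zero_zero] using hp00
    · simpa using hMkdiag _
end
end
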